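/- arXiv:1702.04705 — 3 statements merged into one kernel-verified Lean document; each statement's English description precedes it below -/
import Mathlib

section
/- Let U ⊆ ℂ be open, let u : ℂ → ℂ be complex-differentiable on U, and let Ψ : ℂ → Matrix (Fin 2) (Fin 2) ℂ be complex-differentiable (entrywise) on U with Ψ'(x) = ![![0,1],![u(x),0]] · Ψ(x) and Ψ(x) invertible for every x ∈ U. Then the matrix-valued function Λ(x) = Ψ(x)⁻¹ · σ₋ · Ψ(x) is three times complex-differentiable on U and satisfies Λ''' − 4·u·Λ' − 2·u'·Λ = 0 entrywise on U. -/
/-!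
Write `A = !![0, 1; u, 0]`, so that `Ψ' = A Ψ`. For any matrix function `M`, differentiating
`Ψ⁻¹ M Ψ` with `(Ψ⁻¹)' = -Ψ⁻¹ A` gives the gauge formula `(Ψ⁻¹ M Ψ)' = Ψ⁻¹ (M' + ⁅M, A⁆) Ψ`.
Starting from `L₀ = σ₋` and iterating `L ↦ L' + ⁅L, A⁆`, the derivatives of `Λ = Ψ⁻¹ σ₋ Ψ` are
`Ψ⁻¹ Lₖ Ψ` with `L₁ = !![-1, 0; 0, 1]`, `L₂ = 2u σ₋ + !![0, -2; 0, 0]` and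
`L₃ = 2u' σ₋ + 4u L₁ = 2u' L₀ + 4u L₁`, which is the third-order equation.
-/

/-- Entrywise complex derivative of a matrix-valued function of one complex variable. -/
noncomputable def matDeriv (F : ℂ → Matrix (Fin 2) (Fin 2) ℂ) (x : ℂ) :
    Matrix (Fin 2) (Fin 2) ℂ :=
  Matrix.of fun i j => deriv (fun y => F y i j) x

/-- The matrix σ₋ = ![![0,0],![1,0]]. -/
def sigmaMinus : Matrix (Fin 2) (Fin 2) ℂ := !![0, 0; 1, 0]

open Filter
open scoped Matrix.Norms.Operator

local notation "M₂" => Matrix (Fin 2) (Fin 2) ℂ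

section RingInverse

variable {𝕜 : Type*} [NontriviallyNormedField 𝕜] {R : Type*} [NormedRing R]
  [HasSummableGeomSeries R] [NormedAlgebra 𝕜 R] {x : 𝕜}

theorem HasDerivAt.ringInverse {f : 𝕜 → R} {f' : R} (hf : HasDerivAt f f' x)
    (hx : IsUnit (f x)) :
    HasDerivAt (fun y => Ring.inverse (f y))
      (-(Ring.inverse (f x) * f' * Ring.inverse (f x))) x := by
  obtain ⟨v, hv⟩ := hx
  rw [← hv, Ring.inverse_unit]
  exact (hv ▸ hasFDerivAt_ringInverse (𝕜 := 𝕜) v).comp_hasDerivAt x hf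

theorem HasDerivAt.ringInverse_mul_mul {Ψ M : 𝕜 → R} {A M' : R}
    (hΨ : HasDerivAt Ψ (A * Ψ x) x) (hx : IsUnit (Ψ x)) (hM : HasDerivAt M M' x) :
    HasDerivAt (fun y => Ring.inverse (Ψ y) * M y * Ψ y)
      (Ring.inverse (Ψ x) * (M' + ⁅M x, A⁆) * Ψ x) x := by
  refine (((hΨ.ringInverse hx).fun_mul hM).fun_mul hΨ).congr_deriv ?_
  have hΨΨ : Ψ x * Ring.inverse (Ψ x) = 1 := Ring.mul_inverse_cancel _ hx
  simp only [Ring.lie_def, mul_assoc, hΨΨ, mul_one]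
  noncomm_ring

end RingInverse

section MatrixDerivative

variable {𝕜 : Type*} [NontriviallyNormedField 𝕜] {m n : Type*} [Fintype m] [Fintype n]

/- The operator norm induces the product topology on matrices, and a derivative in one
variable is a limit of slopes. -/
theorem Matrix.hasDerivAt_iff {F : 𝕜 → Matrix m n 𝕜} {F' : Matrix m n 𝕜} {x : 𝕜} :
    HasDerivAt F F' x ↔ ∀ i j, HasDerivAt (fun y => F y i j) (F' i j) x := by
  refine (hasDerivAt_iff_tendsto_slope (f := F)).trans ?_
  simp only [hasDerivAt_iff_tendsto_slope]
  exact tendsto_pi_nhds.trans (forall_congr' fun i => tendsto_pi_nhds (A := fun _ : n => 𝕜))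

theorem Matrix.differentiableOn_apply_of_hasDerivAt {U : Set 𝕜} {F G : 𝕜 → Matrix m n 𝕜}
    (hF : ∀ y ∈ U, HasDerivAt F (G y) y) (i : m) (j : n) :
    DifferentiableOn 𝕜 (fun y => F y i j) U := fun y hy =>
  (Matrix.hasDerivAt_iff.1 (hF y hy) i j).differentiableAt.differentiableWithinAt

end MatrixDerivative

theorem HasDerivAt.matrix_inv_mul_mul {𝕜 : Type*} [RCLike 𝕜] {n : Type*} [Fintype n]
    [DecidableEq n] {x : 𝕜} {Ψ M : 𝕜 → Matrix n n 𝕜} {A M' : Matrix n n 𝕜}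
    (hΨ : HasDerivAt Ψ (A * Ψ x) x) (hx : IsUnit (Ψ x)) (hM : HasDerivAt M M' x) :
    HasDerivAt (fun y => (Ψ y)⁻¹ * M y * Ψ y) ((Ψ x)⁻¹ * (M' + ⁅M x, A⁆) * Ψ x) x := by
  simp only [Matrix.nonsing_inv_eq_ringInverse]
  exact hΨ.ringInverse_mul_mul hx hM

section MatDeriv

variable {F G : ℂ → M₂} {F' : M₂} {x : ℂ}

theorem HasDerivAt.matDeriv_eq (h : HasDerivAt F F' x) : matDeriv F x = F' := by
  ext i j
  exact (Matrix.hasDerivAt_iff.1 h i j).deriv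

theorem hasDerivAt_matDeriv {U : Set ℂ} (hU : IsOpen U) (hF : ∀ y ∈ U, HasDerivAt F (G y) y)
    (hx : x ∈ U) (hG : HasDerivAt G F' x) : HasDerivAt (matDeriv F) F' x :=
  hG.congr_of_eventuallyEq <| eventually_of_mem (hU.mem_nhds hx) fun y hy => (hF y hy).matDeriv_eq

end MatDeriv

section Brackets

variable (a : ℂ)

theorem sigmaMinus_lie : ⁅sigmaMinus, (!![0, 1; a, 0] : M₂)⁆ = !![-1, 0; 0, 1] := by
  ext i j
  fin_cases i <;> fin_cases j <;> simp [Ring.lie_def, sigmaMinus]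

theorem neg_one_one_diag_lie :
    ⁅(!![-1, 0; 0, 1] : M₂), !![0, 1; a, 0]⁆ = (2 * a) • sigmaMinus + !![0, -2; 0, 0] := by
  ext i j
  fin_cases i <;> fin_cases j <;> simp [Ring.lie_def, sigmaMinus] <;> ring

theorem smul_sigmaMinus_add_lie :
    ⁅(2 * a) • sigmaMinus + !![0, -2; 0, 0], (!![0, 1; a, 0] : M₂)⁆
      = (4 * a) • !![-1, 0; 0, 1] := by
  ext i j
  fin_cases i <;> fin_cases j <;> simp [Ring.lie_def, sigmaMinus] <;> ring

end Brackets

/-- If `Ψ` solves `Ψ' = ![![0,1],![u,0]]·Ψ` on an open `U ⊆ ℂ` with `Ψ(x)`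
invertible and `u` complex-differentiable on `U`, then `Λ = Ψ⁻¹·σ₋·Ψ` is three times
complex-differentiable (entrywise) on `U` and satisfies `Λ''' − 4·u·Λ' − 2·u'·Λ = 0` on `U`. -/
theorem lambda_satisfies_third_order_equation
    (U : Set ℂ) (hU : IsOpen U)
    (u : ℂ → ℂ) (hu : DifferentiableOn ℂ u U)
    (Ψ : ℂ → Matrix (Fin 2) (Fin 2) ℂ)
    (hΨ : ∀ i j, DifferentiableOn ℂ (fun y => Ψ y i j) U)
    (heq : ∀ x ∈ U, matDeriv Ψ x = !![0, 1; u x, 0] * Ψ x)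
    (hinv : ∀ x ∈ U, IsUnit (Ψ x)) :
    (∀ i j, DifferentiableOn ℂ
      (fun y => ((Ψ y)⁻¹ * sigmaMinus * Ψ y) i j) U) ∧
    (∀ i j, DifferentiableOn ℂ
      (fun y => matDeriv (fun z => (Ψ z)⁻¹ * sigmaMinus * Ψ z) y i j) U) ∧
    (∀ i j, DifferentiableOn ℂ
      (fun y => matDeriv (matDeriv (fun z => (Ψ z)⁻¹ * sigmaMinus * Ψ z)) y i j) U) ∧
    ∀ x ∈ U,
      matDeriv (matDeriv (matDeriv (fun z => (Ψ z)⁻¹ * sigmaMinus * Ψ z))) x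
        - (4 * u x) • matDeriv (fun z => (Ψ z)⁻¹ * sigmaMinus * Ψ z) x
        - (2 * deriv u x) • ((Ψ x)⁻¹ * sigmaMinus * Ψ x) = 0 := by
  have hΨ' : ∀ x ∈ U, HasDerivAt Ψ (!![0, 1; u x, 0] * Ψ x) x := fun x hx => by
    rw [← heq x hx, Matrix.hasDerivAt_iff]
    exact fun i j => ((hΨ i j).differentiableAt (hU.mem_nhds hx)).hasDerivAt
  have h₁ : ∀ x ∈ U, HasDerivAt (fun z => (Ψ z)⁻¹ * sigmaMinus * Ψ z)
      ((Ψ x)⁻¹ * !![-1, 0; 0, 1] * Ψ x) x := fun x hx => by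
    simpa only [zero_add, sigmaMinus_lie] using
      (hΨ' x hx).matrix_inv_mul_mul (hinv x hx) (hasDerivAt_const x sigmaMinus)
  have h₂ : ∀ x ∈ U, HasDerivAt (matDeriv fun z => (Ψ z)⁻¹ * sigmaMinus * Ψ z)
      ((Ψ x)⁻¹ * ((2 * u x) • sigmaMinus + !![0, -2; 0, 0]) * Ψ x) x := fun x hx =>
    hasDerivAt_matDeriv hU h₁ hx <| by
      simpa only [zero_add, neg_one_one_diag_lie] using
        (hΨ' x hx).matrix_inv_mul_mul (hinv x hx) (hasDerivAt_const x (!![-1, 0; 0, 1] : M₂))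
  have h₃ : ∀ x ∈ U, HasDerivAt (matDeriv (matDeriv fun z => (Ψ z)⁻¹ * sigmaMinus * Ψ z))
      ((Ψ x)⁻¹ * ((2 * deriv u x) • sigmaMinus + (4 * u x) • !![-1, 0; 0, 1]) * Ψ x) x :=
    fun x hx => hasDerivAt_matDeriv hU h₂ hx <| by
      have hL₂ := (((hu.differentiableAt (hU.mem_nhds hx)).hasDerivAt.const_mul 2).smul_const
        sigmaMinus).add_const (!![0, -2; 0, 0] : M₂)
      simpa only [smul_sigmaMinus_add_lie] using (hΨ' x hx).matrix_inv_mul_mul (hinv x hx) hL₂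
  refine ⟨Matrix.differentiableOn_apply_of_hasDerivAt h₁,
    Matrix.differentiableOn_apply_of_hasDerivAt h₂,
    Matrix.differentiableOn_apply_of_hasDerivAt h₃, fun x hx => ?_⟩
  rw [(h₃ x hx).matDeriv_eq, (h₁ x hx).matDeriv_eq]
  simp only [Matrix.mul_add, Matrix.add_mul, Matrix.mul_smul, Matrix.smul_mul]
  abel
end

section
/- Let U ⊆ ℂ be open; let v : ℂ → ℂ be twice complex-differentiable on U with v(x) ≠ 0 for all x ∈ U; let w : ℂ → ℂ be complex-differentiable on U with w(x)² = v(x) for all x ∈ U; let S : ℂ → ℂ be any function; and let φ₁, φ₂ : ℂ → ℂ be twice complex-differentiable on U with φᵢ'' + ((1/2)·S + v²)·φᵢ = 0 on U for i = 1, 2. Define S_v = (v'/v)' − (1/2)·(v'/v)², u = −(S − S_v)/(2·v²) − 1, ψᵢ = φᵢ·w, and the matrix-valued function Ψ(x) = ![![ψ₁(x), ψ₂(x)],![ψ₁'(x)/v(x), ψ₂'(x)/v(x)]]. Then Ψ is complex-differentiable on U and satisfies the first-order matrix equation Ψ'(x) = ![![0, v(x)],![u(x)·v(x), 0]] · Ψ(x)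 for every x ∈ U. -/
/-- `S_v = (v'/v)' − (1/2)·(v'/v)²`, the Schwarzian derivative of the flat coordinate
`z = ∫ v` with respect to the original coordinate. -/
noncomputable def Sv (v : ℂ → ℂ) (x : ℂ) : ℂ :=
  deriv (fun y => deriv v y / v y) x - (1 / 2) * (deriv v x / v x) ^ 2

/-- The potential `u = −(S − S_v)/(2·v²) − 1`. -/
noncomputable def upot (S v : ℂ → ℂ) (x : ℂ) : ℂ :=
  -((S x - Sv v x) / (2 * v x ^ 2)) - 1

/-- The modified Wronskian matrix `Ψ(x) = ![![ψ₁, ψ₂],![ψ₁'/v, ψ₂'/v]]` built from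
`ψᵢ = φᵢ·w`. -/
noncomputable def modifiedWronskian (φ₁ φ₂ w v : ℂ → ℂ) (x : ℂ) :
    Matrix (Fin 2) (Fin 2) ℂ :=
  !![φ₁ x * w x, φ₂ x * w x;
     deriv (fun y => φ₁ y * w y) x / v x, deriv (fun y => φ₂ y * w y) x / v x]

open Filter Topology

section
variable {𝕜 : Type*} [NontriviallyNormedField 𝕜] {U : Set 𝕜} {v w φ : 𝕜 → 𝕜} {x : 𝕜}

theorem hasDerivAt_of_sq_eventuallyEq (hw : DifferentiableAt 𝕜 w x)
    (hsq : (fun y => w y ^ 2) =ᶠ[𝓝 x] v) : HasDerivAt v (2 * w x * deriv w x) x := by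
  have h := hw.hasDerivAt.fun_pow 2
  simp only [Nat.cast_ofNat] at h
  exact h.congr_of_eventuallyEq hsq.symm |>.congr_deriv (by ring)

variable [CharZero 𝕜]

theorem hasDerivAt_half_logDeriv_mul_of_sq_eventuallyEq (hw : DifferentiableAt 𝕜 w x)
    (hsq : (fun y => w y ^ 2) =ᶠ[𝓝 x] v) (hvx : v x ≠ 0) :
    HasDerivAt w (logDeriv v x / 2 * w x) x := by
  have hwx : w x ≠ 0 := ne_zero_pow two_ne_zero (hsq.eq_of_nhds ▸ hvx)
  rw [logDeriv_apply, (hasDerivAt_of_sq_eventuallyEq hw hsq).deriv, ← hsq.eq_of_nhds]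
  refine hw.hasDerivAt.congr_deriv ?_
  field_simp

theorem hasDerivAt_half_logDeriv_mul_of_sq_eqOn (hU : IsOpen U) (hw : DifferentiableOn 𝕜 w U)
    (hw2 : ∀ y ∈ U, w y ^ 2 = v y) (hvne : ∀ y ∈ U, v y ≠ 0) (hx : x ∈ U) :
    HasDerivAt w (logDeriv v x / 2 * w x) x :=
  hasDerivAt_half_logDeriv_mul_of_sq_eventuallyEq ((hw x hx).differentiableAt (hU.mem_nhds hx))
    (eventually_of_mem (hU.mem_nhds hx) hw2) (hvne x hx)

theorem deriv_mul_div_eventuallyEq_logDeriv (hU : IsOpen U) (hw : DifferentiableOn 𝕜 w U)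
    (hw2 : ∀ y ∈ U, w y ^ 2 = v y) (hvne : ∀ y ∈ U, v y ≠ 0) (hφ : DifferentiableOn 𝕜 φ U)
    (hx : x ∈ U) :
    (fun y => deriv (fun z => φ z * w z) y / v y) =ᶠ[𝓝 x]
      fun y => (deriv φ y + logDeriv v y / 2 * φ y) / w y := by
  filter_upwards [hU.mem_nhds hx] with y hy
  have hwy : w y ≠ 0 := ne_zero_pow two_ne_zero ((hw2 y hy).symm ▸ hvne y hy)
  rw [(((hφ y hy).differentiableAt (hU.mem_nhds hy)).hasDerivAt.fun_mul
    (hasDerivAt_half_logDeriv_mul_of_sq_eqOn hU hw hw2 hvne hy)).deriv, ← hw2 y hy]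
  field_simp

end

theorem Sv_eq_logDeriv (v : ℂ → ℂ) (x : ℂ) :
    Sv v x = deriv (logDeriv v) x - logDeriv v x ^ 2 / 2 := by
  have hL : logDeriv v = fun y => deriv v y / v y := rfl
  rw [Sv, hL]
  ring

section
variable {U : Set ℂ} {v w φ S : ℂ → ℂ} {x : ℂ}

theorem hasDerivAt_deriv_mul_div (hU : IsOpen U)
    (hv' : DifferentiableOn ℂ (deriv v) U) (hvne : ∀ y ∈ U, v y ≠ 0)
    (hw : DifferentiableOn ℂ w U) (hw2 : ∀ y ∈ U, w y ^ 2 = v y)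
    (hφ : DifferentiableOn ℂ φ U) (hφ' : DifferentiableOn ℂ (deriv φ) U) (hx : x ∈ U) :
    HasDerivAt (fun y => deriv (fun z => φ z * w z) y / v y)
      ((deriv (deriv φ) x + Sv v x / 2 * φ x) / w x) x := by
  have hmem := hU.mem_nhds hx
  have hwx : w x ≠ 0 := ne_zero_pow two_ne_zero ((hw2 x hx).symm ▸ hvne x hx)
  have hwd := hasDerivAt_half_logDeriv_mul_of_sq_eqOn hU hw hw2 hvne hx
  have hvd : DifferentiableAt ℂ v x :=
    (hasDerivAt_of_sq_eventuallyEq hwd.differentiableAt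
      (eventually_of_mem hmem hw2)).differentiableAt
  have hL : DifferentiableAt ℂ (logDeriv v) x :=
    ((hv' x hx).differentiableAt hmem).div hvd (hvne x hx)
  have hN := ((hφ' x hx).differentiableAt hmem).hasDerivAt.fun_add
    ((hL.hasDerivAt.div_const 2).fun_mul ((hφ x hx).differentiableAt hmem).hasDerivAt)
  refine ((hN.div hwd hwx).congr_of_eventuallyEq
    (deriv_mul_div_eventuallyEq_logDeriv hU hw hw2 hvne hφ hx)).congr_deriv ?_
  rw [Sv_eq_logDeriv]
  field_simp
  ring

theorem hasDerivAt_deriv_mul_div_of_schroedinger (hU : IsOpen U)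
    (hv' : DifferentiableOn ℂ (deriv v) U) (hvne : ∀ y ∈ U, v y ≠ 0)
    (hw : DifferentiableOn ℂ w U) (hw2 : ∀ y ∈ U, w y ^ 2 = v y)
    (hφ : DifferentiableOn ℂ φ U) (hφ' : DifferentiableOn ℂ (deriv φ) U)
    (heq : deriv (deriv φ) x + ((1 / 2) * S x + v x ^ 2) * φ x = 0) (hx : x ∈ U) :
    HasDerivAt (fun y => deriv (fun z => φ z * w z) y / v y)
      (upot S v x * v x * (φ x * w x)) x := by
  refine (hasDerivAt_deriv_mul_div hU hv' hvne hw hw2 hφ hφ' hx).congr_deriv ?_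
  have hwx : w x ≠ 0 := ne_zero_pow two_ne_zero ((hw2 x hx).symm ▸ hvne x hx)
  rw [upot, ← hw2 x hx]
  field_simp
  linear_combination 2 * heq + 2 * φ x * (w x ^ 2 + v x) * hw2 x hx

end

theorem schroedinger_to_first_order_matrix_general
    (U : Set ℂ) (hU : IsOpen U)
    (v w S φ₁ φ₂ : ℂ → ℂ)
    (hv' : DifferentiableOn ℂ (deriv v) U)
    (hvne : ∀ x ∈ U, v x ≠ 0)
    (hw : DifferentiableOn ℂ w U)
    (hw2 : ∀ x ∈ U, w x ^ 2 = v x)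
    (hφ₁ : DifferentiableOn ℂ φ₁ U) (hφ₁' : DifferentiableOn ℂ (deriv φ₁) U)
    (hφ₂ : DifferentiableOn ℂ φ₂ U) (hφ₂' : DifferentiableOn ℂ (deriv φ₂) U)
    (heq₁ : ∀ x ∈ U, deriv (deriv φ₁) x + ((1 / 2) * S x + v x ^ 2) * φ₁ x = 0)
    (heq₂ : ∀ x ∈ U, deriv (deriv φ₂) x + ((1 / 2) * S x + v x ^ 2) * φ₂ x = 0) :
    (∀ i j, DifferentiableOn ℂ (fun y => modifiedWronskian φ₁ φ₂ w v y i j) U) ∧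
    ∀ x ∈ U,
      matDeriv (modifiedWronskian φ₁ φ₂ w v) x
        = !![0, v x; upot S v x * v x, 0] * modifiedWronskian φ₁ φ₂ w v x := by
  have hdiv₁ := fun x hx =>
    hasDerivAt_deriv_mul_div_of_schroedinger hU hv' hvne hw hw2 hφ₁ hφ₁' (heq₁ x hx) hx
  have hdiv₂ := fun x hx =>
    hasDerivAt_deriv_mul_div_of_schroedinger hU hv' hvne hw hw2 hφ₂ hφ₂' (heq₂ x hx) hx
  refine ⟨fun i j => ?_, fun x hx => ?_⟩
  · fin_cases i <;> fin_cases j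
    · exact hφ₁.mul hw
    · exact hφ₂.mul hw
    · exact fun x hx => (hdiv₁ x hx).differentiableAt.differentiableWithinAt
    · exact fun x hx => (hdiv₂ x hx).differentiableAt.differentiableWithinAt
  · ext i j
    fin_cases i <;> fin_cases j <;>
      simp only [matDeriv, modifiedWronskian, Matrix.of_apply, Matrix.cons_val',
        Matrix.cons_val_fin_one, Fin.zero_eta, Fin.isValue, Fin.mk_one, Matrix.cons_val_zero,
        Matrix.cons_val_one, Matrix.mul_apply, Fin.sum_univ_two, zero_mul, zero_add, add_zero]
    · exact (mul_div_cancel₀ _ (hvne x hx)).symm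
    · exact (mul_div_cancel₀ _ (hvne x hx)).symm
    · exact (hdiv₁ x hx).deriv
    · exact (hdiv₂ x hx).deriv

/-- With `v` twice complex-differentiable and nonvanishing on an open
`U ⊆ ℂ`, `w² = v` with `w` complex-differentiable, and `φ₁, φ₂` twice
complex-differentiable solutions of `φ'' + ((1/2)·S + v²)·φ = 0` on `U`, the modified
Wronskian matrix `Ψ = ![![ψ₁, ψ₂],![ψ₁'/v, ψ₂'/v]]` (with `ψᵢ = φᵢ·w`) is
complex-differentiable entrywise on `U` and satisfies
`Ψ' = ![![0, v],![u·v, 0]]·Ψ` on `U`, where `u = −(S − S_v)/(2·v²) − 1`. -/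
theorem schroedinger_to_first_order_matrix
    (U : Set ℂ) (hU : IsOpen U)
    (v w S φ₁ φ₂ : ℂ → ℂ)
    (hv : DifferentiableOn ℂ v U) (hv' : DifferentiableOn ℂ (deriv v) U)
    (hvne : ∀ x ∈ U, v x ≠ 0)
    (hw : DifferentiableOn ℂ w U)
    (hw2 : ∀ x ∈ U, w x ^ 2 = v x)
    (hφ₁ : DifferentiableOn ℂ φ₁ U) (hφ₁' : DifferentiableOn ℂ (deriv φ₁) U)
    (hφ₂ : DifferentiableOn ℂ φ₂ U) (hφ₂' : DifferentiableOn ℂ (deriv φ₂) U)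
    (heq₁ : ∀ x ∈ U, deriv (deriv φ₁) x + ((1 / 2) * S x + v x ^ 2) * φ₁ x = 0)
    (heq₂ : ∀ x ∈ U, deriv (deriv φ₂) x + ((1 / 2) * S x + v x ^ 2) * φ₂ x = 0) :
    (∀ i j, DifferentiableOn ℂ (fun y => modifiedWronskian φ₁ φ₂ w v y i j) U) ∧
    ∀ x ∈ U,
      matDeriv (modifiedWronskian φ₁ φ₂ w v) x
        = !![0, v x; upot S v x * v x, 0] * modifiedWronskian φ₁ φ₂ w v x :=
  schroedinger_to_first_order_matrix_general U hU v w S φ₁ φ₂ hv' hvne hw hw2 hφ₁ hφ₁' hφ₂ hφ₂' heq₁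
    heq₂
end

section
/- Let m ∈ ℕ, let V ⊆ ℂ × ℂ be open, let A : ℂ × ℂ → Matrix (Fin m) (Fin m) ℂ be continuously ℂ-differentiable on V, and let Φ : ℂ × ℂ → Matrix (Fin m) (Fin m) ℂ be twice continuously ℂ-differentiable on V such that Φ(x,s) is invertible and ∂Φ/∂x(x,s) = A(x,s)·Φ(x,s) for all (x,s) ∈ V, and such that Φ(x₀,s) equals the identity matrix for every s with (x₀,s) ∈ V, where x₀ ∈ ℂ is fixed. Fix s ∈ ℂ and let γ : [0,1] → ℂ be continuously differentiable with γ(0) = x₀ and (γ(r), s) ∈ V for all r ∈ [0,1]. Then Φ(γ(1),s)⁻¹ · ∂Φ/∂s(γ(1),s) = ∫₀¹ Φ(γ(r),s)⁻¹ · ∂A/∂s(γ(r),s) · Φ(γ(r),s) · γ'(r) dr. -/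
/-- Entrywise complex partial derivative with respect to the first variable of a
matrix-valued function of two complex variables. -/
noncomputable def pdx {m : ℕ} (F : ℂ × ℂ → Matrix (Fin m) (Fin m) ℂ) (p : ℂ × ℂ) :
    Matrix (Fin m) (Fin m) ℂ :=
  Matrix.of fun i j => deriv (fun z => F (z, p.2) i j) p.1

/-- Entrywise complex partial derivative with respect to the second variable of a
matrix-valued function of two complex variables. -/
noncomputable def pds {m : ℕ} (F : ℂ × ℂ → Matrix (Fin m) (Fin m) ℂ) (p : ℂ × ℂ) :
    Matrix (Fin m) (Fin m) ℂ :=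
  Matrix.of fun i j => deriv (fun z => F (p.1, z) i j) p.2

/-!
Write `Y = ∂Φ/∂s`. Differentiating `∂Φ/∂x = A Φ` in `s` and exchanging the mixed partials gives
`∂Y/∂x = (∂A/∂s) Φ + A Y`, and then `∂(Φ⁻¹ Y)/∂x = Φ⁻¹ (∂A/∂s) Φ`: the `A`-terms cancel, just as in
variation of parameters. Since `Φ(x₀, ·) = 1`, `Y` vanishes at `(x₀, s)`, and the fundamental
theorem of calculus along `γ` gives the formula.
-/

open Topology Set

section Partials

variable {𝕜 E : Type*} [NontriviallyNormedField 𝕜] [NormedAddCommGroup E] [NormedSpace 𝕜 E]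

theorem HasFDerivAt.hasDerivAt_fst_slice {F : 𝕜 × 𝕜 → E} {F' : 𝕜 × 𝕜 →L[𝕜] E} {p : 𝕜 × 𝕜}
    (h : HasFDerivAt F F' p) : HasDerivAt (fun z => F (z, p.2)) (F' (1, 0)) p.1 :=
  h.comp_hasDerivAt p.1 ((hasDerivAt_id _).prodMk (hasDerivAt_const _ _))

theorem HasFDerivAt.hasDerivAt_snd_slice {F : 𝕜 × 𝕜 → E} {F' : 𝕜 × 𝕜 →L[𝕜] E} {p : 𝕜 × 𝕜}
    (h : HasFDerivAt F F' p) : HasDerivAt (fun w => F (p.1, w)) (F' (0, 1)) p.2 :=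
  h.comp_hasDerivAt p.2 ((hasDerivAt_const _ _).prodMk (hasDerivAt_id _))

-- Symmetry of mixed partial derivatives.
theorem hasDerivAt_deriv_snd_slice [IsRCLikeNormedField 𝕜] {F G : 𝕜 × 𝕜 → E}
    {V : Set (𝕜 × 𝕜)} (hV : IsOpen V) (hF : ContDiffOn 𝕜 2 F V)
    (hG : ∀ q ∈ V, HasDerivAt (fun z => F (z, q.2)) (G q) q.1) {p : 𝕜 × 𝕜} (hp : p ∈ V)
    {G₂ : E} (hG₂ : HasDerivAt (fun w => G (p.1, w)) G₂ p.2) :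
    HasDerivAt (fun z => deriv (fun w => F (z, w)) p.2) G₂ p.1 := by
  have hF' : ∀ q ∈ V, HasFDerivAt F (fderiv 𝕜 F q) q := fun q hq =>
    ((hF.contDiffAt (hV.mem_nhds hq)).differentiableAt two_ne_zero).hasFDerivAt
  set f'' := fderiv 𝕜 (fderiv 𝕜 F) p
  have hF'' : HasFDerivAt (fderiv 𝕜 F) f'' p :=
    (((hF.contDiffAt (hV.mem_nhds hp)).fderiv_right (m := 1) le_rfl).differentiableAt
      one_ne_zero).hasFDerivAt
  have hsymm : f'' (1, 0) (0, 1) = f'' (0, 1) (1, 0) :=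
    second_derivative_symmetric_of_eventually
      (Filter.eventually_of_mem (hV.mem_nhds hp) hF') hF'' _ _
  have hF''_apply : ∀ v : 𝕜 × 𝕜, HasFDerivAt (fun q => fderiv 𝕜 F q v)
      ((ContinuousLinearMap.apply 𝕜 E v).comp f'') p := fun v =>
    (ContinuousLinearMap.apply 𝕜 E v).hasFDerivAt.comp p hF''
  have hG₂_eq : G₂ = f'' (0, 1) (1, 0) := by
    refine hG₂.unique ((hF''_apply (1, 0)).hasDerivAt_snd_slice.congr_of_eventuallyEq ?_)
    filter_upwards [(continuous_const.prodMk continuous_id).continuousAt.preimage_mem_nhds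
      (hV.mem_nhds hp)] with w hw
    exact (hG _ hw).unique (hF' _ hw).hasDerivAt_fst_slice
  rw [hG₂_eq, ← hsymm]
  refine (hF''_apply (0, 1)).hasDerivAt_fst_slice.congr_of_eventuallyEq ?_
  filter_upwards [(continuous_id.prodMk continuous_const).continuousAt.preimage_mem_nhds
    (hV.mem_nhds hp)] with z hz
  exact (hF' _ hz).hasDerivAt_snd_slice.deriv

end Partials

theorem HasDerivAt.ringInverse_mul {𝕜 𝔸 : Type*} [NontriviallyNormedField 𝕜] [NormedRing 𝔸]
    [NormedAlgebra 𝕜 𝔸] [HasSummableGeomSeries 𝔸] {Φ Y : 𝕜 → 𝔸} {A B : 𝔸} {x : 𝕜}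
    (hΦ : HasDerivAt Φ (A * Φ x) x) (hY : HasDerivAt Y (B * Φ x + A * Y x) x)
    (hu : IsUnit (Φ x)) :
    HasDerivAt (fun z => Ring.inverse (Φ z) * Y z) (Ring.inverse (Φ x) * B * Φ x) x := by
  obtain ⟨u, hu⟩ := hu
  have hinv := (hu ▸ hasFDerivAt_ringInverse (𝕜 := 𝕜) u).comp_hasDerivAt x hΦ
  refine (hinv.fun_mul hY).congr_deriv ?_
  simp only [Function.comp_apply, ← hu, Ring.inverse_unit, neg_apply,
    ContinuousLinearMap.mulLeftRight_apply, mul_assoc, Units.mul_inv, mul_one]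
  noncomm_ring

theorem integral_derivWithin_smul_comp_eq_sub {E : Type*} [NormedAddCommGroup E]
    [NormedSpace ℂ E] [CompleteSpace E] {g g' : ℂ → E} {U : Set ℂ} {γ : ℝ → ℂ} {a b : ℝ}
    (hab : a < b) (hg : ∀ z ∈ U, HasDerivAt g (g' z) z) (hg' : ContinuousOn g' U)
    (hγ : ContDiffOn ℝ 1 γ (Icc a b)) (hγU : MapsTo γ (Icc a b) U) :
    ∫ r in a..b, derivWithin γ (Icc a b) r • g' (γ r) = g (γ b) - g (γ a) := by
  refine intervalIntegral.integral_eq_sub_of_hasDeriv_right_of_le (f := fun r => g (γ r))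
    hab.le ?_ ?_ ?_
  · exact ContinuousOn.comp (fun z hz => (hg z hz).continuousAt.continuousWithinAt)
      hγ.continuousOn hγU
  · intro r hr
    have hγr : HasDerivAt γ (derivWithin γ (Icc a b) r) r :=
      ((hγ.differentiableOn one_ne_zero r (Ioo_subset_Icc_self hr)).hasDerivWithinAt).hasDerivAt
        (Icc_mem_nhds hr.1 hr.2)
    exact ((hg _ (hγU (Ioo_subset_Icc_self hr))).scomp r hγr).hasDerivWithinAt
  · refine ContinuousOn.intervalIntegrable ?_
    rw [uIcc_of_le hab.le]
    exact (hγ.continuousOn_derivWithin (uniqueDiffOn_Icc hab) le_rfl).smul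
      (hg'.comp hγ.continuousOn hγU)

namespace Matrix

-- Any norm would do for the entrywise statements; the operator norm makes square matrices a
-- Banach algebra, as needed for `HasDerivAt.ringInverse_mul`.
open scoped Matrix.Norms.Operator

variable {l n 𝕜 E : Type*} [Fintype l] [Fintype n] [NontriviallyNormedField 𝕜] [CompleteSpace 𝕜]

noncomputable def toPiCLE : Matrix l n 𝕜 ≃L[𝕜] (l → n → 𝕜) :=
  (ofLinearEquiv 𝕜).symm.toContinuousLinearEquiv

theorem contDiffOn_iff_forall_entry [NormedAddCommGroup E] [NormedSpace 𝕜 E]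
    {F : E → Matrix l n 𝕜} {s : Set E} {k : WithTop ℕ∞} :
    ContDiffOn 𝕜 k F s ↔ ∀ i j, ContDiffOn 𝕜 k (fun x => F x i j) s := by
  rw [← toPiCLE.comp_contDiffOn_iff, contDiffOn_pi]
  simp only [contDiffOn_pi]
  rfl

theorem _root_.HasDerivAt.matrix_entry {F : 𝕜 → Matrix l n 𝕜} {F' : Matrix l n 𝕜} {x : 𝕜}
    (h : HasDerivAt F F' x) (i : l) (j : n) : HasDerivAt (fun z => F z i j) (F' i j) x :=
  hasDerivAt_pi.1 (hasDerivAt_pi.1 (toPiCLE.hasFDerivAt.comp_hasDerivAt x h) i) j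

theorem _root_.ContinuousOn.matrix_entry [TopologicalSpace E] {F : E → Matrix l n 𝕜}
    {s : Set E} (h : ContinuousOn F s) (i : l) (j : n) : ContinuousOn (fun x => F x i j) s :=
  continuousOn_pi.1 (continuousOn_pi.1 (toPiCLE.continuous.comp_continuousOn h) i) j

end Matrix

section MatrixPartials

open scoped Matrix.Norms.Operator

variable {m : ℕ}

theorem pdx_eq_of_hasDerivAt {F : ℂ × ℂ → Matrix (Fin m) (Fin m) ℂ} {p : ℂ × ℂ}
    {D : Matrix (Fin m) (Fin m) ℂ} (h : HasDerivAt (fun z => F (z, p.2)) D p.1) :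
    pdx F p = D := by
  ext i j
  exact (h.matrix_entry i j).deriv

theorem pds_eq_of_hasDerivAt {F : ℂ × ℂ → Matrix (Fin m) (Fin m) ℂ} {p : ℂ × ℂ}
    {D : Matrix (Fin m) (Fin m) ℂ} (h : HasDerivAt (fun w => F (p.1, w)) D p.2) :
    pds F p = D := by
  ext i j
  exact (h.matrix_entry i j).deriv

theorem pds_eq_zero_of_eventually_eq {F : ℂ × ℂ → Matrix (Fin m) (Fin m) ℂ} {p : ℂ × ℂ}
    {c : Matrix (Fin m) (Fin m) ℂ} (h : ∀ᶠ w in 𝓝 p.2, F (p.1, w) = c) : pds F p = 0 :=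
  pds_eq_of_hasDerivAt ((hasDerivAt_const _ c).congr_of_eventuallyEq h)

theorem ContDiffOn.hasDerivAt_pds {k : WithTop ℕ∞} {F : ℂ × ℂ → Matrix (Fin m) (Fin m) ℂ}
    {V : Set (ℂ × ℂ)} (hV : IsOpen V) (hF : ContDiffOn ℂ k F V) (hk : k ≠ 0) {p : ℂ × ℂ}
    (hp : p ∈ V) : HasDerivAt (fun w => F (p.1, w)) (pds F p) p.2 := by
  have h := ((hF.contDiffAt (hV.mem_nhds hp)).differentiableAt hk).hasFDerivAt
  rw [pds_eq_of_hasDerivAt h.hasDerivAt_snd_slice]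
  exact h.hasDerivAt_snd_slice

variable {V : Set (ℂ × ℂ)} {A Φ : ℂ × ℂ → Matrix (Fin m) (Fin m) ℂ}

theorem hasDerivAt_inv_mul_pds (hV : IsOpen V) (hA : ∀ i j, ContDiffOn ℂ 1 (fun p => A p i j) V)
    (hΦ : ∀ i j, ContDiffOn ℂ 2 (fun p => Φ p i j) V) (hinv : ∀ p ∈ V, IsUnit (Φ p))
    (heq : ∀ p ∈ V, pdx Φ p = A p * Φ p) {p : ℂ × ℂ} (hp : p ∈ V) (i j : Fin m) :
    HasDerivAt (fun z => ((Φ (z, p.2))⁻¹ * pds Φ (z, p.2)) i j)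
      (((Φ p)⁻¹ * pds A p * Φ p) i j) p.1 := by
  rw [← Matrix.contDiffOn_iff_forall_entry] at hA hΦ
  have hΦ_fst : ∀ q ∈ V, HasDerivAt (fun z => Φ (z, q.2)) (A q * Φ q) q.1 := fun q hq => by
    have h := ((hΦ.contDiffAt (hV.mem_nhds hq)).differentiableAt two_ne_zero).hasFDerivAt
    rw [← heq q hq, pdx_eq_of_hasDerivAt h.hasDerivAt_fst_slice]
    exact h.hasDerivAt_fst_slice
  have hpdsΦ : HasDerivAt (fun z => pds Φ (z, p.2)) (pds A p * Φ p + A p * pds Φ p) p.1 := by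
    have hAΦ_snd := (hA.hasDerivAt_pds hV one_ne_zero hp).mul (hΦ.hasDerivAt_pds hV two_ne_zero hp)
    refine (hasDerivAt_deriv_snd_slice hV hΦ hΦ_fst hp hAΦ_snd).congr_of_eventuallyEq ?_
    filter_upwards [(continuous_id.prodMk continuous_const).continuousAt.preimage_mem_nhds
      (hV.mem_nhds hp)] with z hz
    exact (hΦ.hasDerivAt_pds hV two_ne_zero hz).deriv.symm
  have h := (hΦ_fst p hp).ringInverse_mul hpdsΦ (hinv p hp)
  simp only [← Matrix.nonsing_inv_eq_ringInverse] at h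
  exact h.matrix_entry i j

theorem continuousOn_inv_mul_pds_mul (hV : IsOpen V)
    (hA : ∀ i j, ContDiffOn ℂ 1 (fun p => A p i j) V)
    (hΦ : ∀ i j, ContDiffOn ℂ 2 (fun p => Φ p i j) V) (hinv : ∀ p ∈ V, IsUnit (Φ p))
    (i j : Fin m) : ContinuousOn (fun p => ((Φ p)⁻¹ * pds A p * Φ p) i j) V := by
  rw [← Matrix.contDiffOn_iff_forall_entry] at hA hΦ
  have hinv_cont : ContinuousOn (fun p => (Φ p)⁻¹) V := fun p hp => by
    obtain ⟨u, hu⟩ := hinv p hp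
    simp only [Matrix.nonsing_inv_eq_ringInverse]
    exact ((hu ▸ NormedRing.inverse_continuousAt u).comp
      (hΦ.continuousOn.continuousAt (hV.mem_nhds hp))).continuousWithinAt
  have hpdsA : ContinuousOn (pds A) V := by
    refine ((hA.continuousOn_fderiv_of_isOpen hV le_rfl).clm_apply
      (continuousOn_const (c := ((0 : ℂ), (1 : ℂ))))).congr fun p hp => ?_
    exact pds_eq_of_hasDerivAt ((hA.contDiffAt (hV.mem_nhds hp)).differentiableAt
      one_ne_zero).hasFDerivAt.hasDerivAt_snd_slice
  exact ((hinv_cont.mul hpdsA).mul hΦ.continuousOn).matrix_entry i j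

end MatrixPartials

/-- Let `Φ` be an invertible solution of `∂Φ/∂x = A·Φ` on an open
`V ⊆ ℂ × ℂ`, with `A` continuously ℂ-differentiable and `Φ` twice continuously
ℂ-differentiable (entrywise) on `V`, normalized by `Φ(x₀, s) = I`. Then for any
continuously differentiable path `γ : [0,1] → ℂ` starting at `x₀` and staying in the
`s`-slice of `V`,
`Φ(γ(1),s)⁻¹·∂Φ/∂s(γ(1),s) = ∫₀¹ Φ(γ(r),s)⁻¹·∂A/∂s(γ(r),s)·Φ(γ(r),s)·γ'(r) dr`. -/
theorem variation_of_parameters_integrated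
    (m : ℕ) (V : Set (ℂ × ℂ)) (hV : IsOpen V)
    (A Φ : ℂ × ℂ → Matrix (Fin m) (Fin m) ℂ)
    (hA : ∀ i j, ContDiffOn ℂ 1 (fun p => A p i j) V)
    (hΦ : ∀ i j, ContDiffOn ℂ 2 (fun p => Φ p i j) V)
    (hinv : ∀ p ∈ V, IsUnit (Φ p))
    (heq : ∀ p ∈ V, pdx Φ p = A p * Φ p)
    (x₀ : ℂ)
    (hnorm : ∀ s : ℂ, (x₀, s) ∈ V → Φ (x₀, s) = 1)
    (s : ℂ) (γ : ℝ → ℂ)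
    (hγ : ContDiffOn ℝ 1 γ (Set.Icc 0 1))
    (hγ0 : γ 0 = x₀)
    (hγV : ∀ r ∈ Set.Icc (0 : ℝ) 1, (γ r, s) ∈ V) :
    (Φ (γ 1, s))⁻¹ * pds Φ (γ 1, s) =
      Matrix.of fun i j =>
        ∫ r in (0 : ℝ)..1,
          ((Φ (γ r, s))⁻¹ * pds A (γ r, s) * Φ (γ r, s)) i j *
            derivWithin γ (Set.Icc 0 1) r := by
  have hx₀ : (x₀, s) ∈ V := hγ0 ▸ hγV 0 ⟨le_rfl, zero_le_one⟩
  have hpds₀ : pds Φ (x₀, s) = 0 := pds_eq_zero_of_eventually_eq (c := 1) <| by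
    filter_upwards [(continuous_const.prodMk continuous_id).continuousAt.preimage_mem_nhds
      (hV.mem_nhds hx₀)] with w hw using hnorm w hw
  ext i j
  have hFTC := integral_derivWithin_smul_comp_eq_sub (U := {z | (z, s) ∈ V}) zero_lt_one
    (g := fun z => ((Φ (z, s))⁻¹ * pds Φ (z, s)) i j)
    (g' := fun z => ((Φ (z, s))⁻¹ * pds A (z, s) * Φ (z, s)) i j)
    (fun z hz => hasDerivAt_inv_mul_pds (p := (z, s)) hV hA hΦ hinv heq hz i j)
    ((continuousOn_inv_mul_pds_mul hV hA hΦ hinv i j).comp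
      (continuous_id.prodMk continuous_const).continuousOn fun _ hz => hz) hγ hγV
  simp only [hγ0, hpds₀, mul_zero, Matrix.zero_apply, sub_zero, smul_eq_mul] at hFTC
  simp only [Matrix.of_apply, ← hFTC, mul_comm]
end
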